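/- arXiv:math/0508386 — 3 statements merged into one kernel-verified Lean document; each statement's English description precedes it below -/
import Mathlib

section
/- An element ε ∈ IS_n satisfies ε·α·ε = ε if and only if dom(ε) ⊆ ran(α) and ε(x) = α⁻¹(x) for all x ∈ dom(ε); hence the idempotents of (IS_n, *_α) are in bijection with the subsets of ran(α). -/
/-- `PInj n` : the symmetric inverse semigroup `IS_n`, modeled as partial
injective maps `Fin n → Option (Fin n)`. -/
abbrev PInj (n : ℕ) : Type :=
  {f : Fin n → Option (Fin n) // ∀ x y z : Fin n, f x = some z → f y = some z → x = y}

/-- Composition, applying `f` first, then `g` (left-to-right, as in the paper). -/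
def PInj.comp {n : ℕ} (f g : PInj n) : PInj n :=
  ⟨fun x => (f.1 x).bind g.1, by
    intro x y z hx hy
    rcases Option.bind_eq_some_iff.mp hx with ⟨w, hfw, hgw⟩
    rcases Option.bind_eq_some_iff.mp hy with ⟨v, hfv, hgv⟩
    cases g.2 w v z hgw hgv
    exact f.2 x y w hfw hfv⟩

/-- The deformed multiplication `x *_α y = x · α · y` on `PInj n`. -/
def PInj.dmul {n : ℕ} (α x y : PInj n) : PInj n := (x.comp α).comp y

/-- The range (image) of a partial injection. -/
def PInj.ran {n : ℕ} (f : PInj n) : Set (Fin n) := {y | ∃ x, f.1 x = some y}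

/-- The domain of a partial injection. -/
def PInj.dom {n : ℕ} (f : PInj n) : Set (Fin n) := {x | (f.1 x).isSome}

/-- The rank of a partial injection: the cardinality of its range. -/
noncomputable def PInj.rank {n : ℕ} (f : PInj n) : ℕ := f.ran.ncard

/-- The permutation `σ ∈ S_n` viewed as an element of `IS_n`. -/
def PInj.ofPerm {n : ℕ} (σ : Equiv.Perm (Fin n)) : PInj n :=
  ⟨fun x => some (σ x), by
    intro x y z hx hy
    exact σ.injective ((Option.some.inj hx).trans (Option.some.inj hy).symm)⟩

/-!
Evaluating `ε·α·ε` at `x` with `ε x = y` gives `ε (α y)`, and injectivity of `ε` turns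
`ε (α y) = y` into `α y = x`; so the `*_α`-idempotents are exactly the restrictions of
`α⁻¹`. A restriction of a partial injection `f` is determined by its domain, which can be any
subset of `dom f`, and `dom α⁻¹ = ran α`.
-/

namespace PInj

variable {n : ℕ}

theorem dmul_apply (α f g : PInj n) (x : Fin n) :
    (dmul α f g).1 x = ((f.1 x).bind α.1).bind g.1 := rfl

theorem mem_dom_iff {f : PInj n} {x : Fin n} : x ∈ f.dom ↔ ∃ y, f.1 x = some y :=
  Option.isSome_iff_exists

def IsRestriction (ε f : PInj n) : Prop := ∀ x y, ε.1 x = some y → f.1 x = some y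

theorem IsRestriction.dom_subset {ε f : PInj n} (h : ε.IsRestriction f) : ε.dom ⊆ f.dom := by
  intro x hx
  obtain ⟨y, hy⟩ := mem_dom_iff.mp hx
  exact mem_dom_iff.mpr ⟨y, h x y hy⟩

open Classical in
noncomputable def restrict (f : PInj n) (A : Set (Fin n)) : PInj n :=
  ⟨fun x => if x ∈ A then f.1 x else none, by
    intro x y z hx hy
    dsimp only at hx hy
    split at hx <;> split at hy
    · exact f.2 x y z hx hy
    all_goals simp only [reduceCtorEq] at hx hy⟩

theorem restrict_apply_eq_some_iff {f : PInj n} {A : Set (Fin n)} {x y : Fin n} :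
    (f.restrict A).1 x = some y ↔ x ∈ A ∧ f.1 x = some y := by
  classical
  simp only [restrict]
  split <;> simp_all

theorem restrict_isRestriction (f : PInj n) (A : Set (Fin n)) : (f.restrict A).IsRestriction f :=
  fun _ _ h => (restrict_apply_eq_some_iff.mp h).2

theorem dom_restrict_of_subset {f : PInj n} {A : Set (Fin n)} (hA : A ⊆ f.dom) :
    (f.restrict A).dom = A := by
  ext x
  simp only [mem_dom_iff, restrict_apply_eq_some_iff]
  exact ⟨fun ⟨_, hx, _⟩ => hx,
    fun hx => (mem_dom_iff.mp (hA hx)).imp fun _ h => ⟨hx, h⟩⟩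

theorem IsRestriction.restrict_dom_eq {ε f : PInj n} (h : ε.IsRestriction f) :
    f.restrict ε.dom = ε := by
  refine Subtype.ext (funext fun x => Option.ext fun y => ?_)
  rw [restrict_apply_eq_some_iff, mem_dom_iff]
  constructor
  · rintro ⟨⟨z, hz⟩, hfy⟩
    rwa [Option.some.inj ((h x z hz).symm.trans hfy)] at hz
  · exact fun hy => ⟨⟨y, hy⟩, h x y hy⟩

noncomputable def restrictionEquiv (f : PInj n) :
    {ε : PInj n // ε.IsRestriction f} ≃ {A : Set (Fin n) // A ⊆ f.dom} where
  toFun ε := ⟨ε.1.dom, ε.2.dom_subset⟩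
  invFun A := ⟨f.restrict A.1, restrict_isRestriction f A.1⟩
  left_inv ε := Subtype.ext ε.2.restrict_dom_eq
  right_inv A := Subtype.ext (dom_restrict_of_subset A.2)

open Classical in
noncomputable def inv (α : PInj n) : PInj n :=
  ⟨fun x => if h : x ∈ α.ran then some h.choose else none, by
    intro x y z hx hy
    dsimp only at hx hy
    split at hx <;> split at hy
    · rename_i hxα hyα
      have hzx : α.1 z = some x := Option.some.inj hx ▸ hxα.choose_spec
      have hzy : α.1 z = some y := Option.some.inj hy ▸ hyα.choose_spec
      exact Option.some.inj (hzx.symm.trans hzy)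
    all_goals simp only [reduceCtorEq] at hx hy⟩

theorem inv_apply_eq_some_iff {α : PInj n} {x y : Fin n} :
    α.inv.1 x = some y ↔ α.1 y = some x := by
  classical
  by_cases hx : x ∈ α.ran
  · simp only [inv, dif_pos hx, Option.some.injEq]
    exact ⟨fun h => h ▸ hx.choose_spec, fun h => α.2 _ _ _ hx.choose_spec h⟩
  · simp only [inv, dif_neg hx, reduceCtorEq, false_iff]
    exact fun h => hx ⟨y, h⟩

theorem dom_inv (α : PInj n) : α.inv.dom = α.ran := by
  ext x
  simp only [mem_dom_iff, inv_apply_eq_some_iff]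
  rfl

theorem isRestriction_inv_iff {ε α : PInj n} :
    ε.IsRestriction α.inv ↔ ∀ x y, ε.1 x = some y → α.1 y = some x := by
  simp only [IsRestriction, inv_apply_eq_some_iff]

theorem dmul_self_eq_self_iff {α ε : PInj n} :
    dmul α ε ε = ε ↔ ε.IsRestriction α.inv := by
  rw [isRestriction_inv_iff]
  constructor
  · intro h x y hxy
    have hx := congrFun (congrArg Subtype.val h) x
    rw [dmul_apply, hxy, Option.bind_some, Option.bind_eq_some_iff] at hx
    obtain ⟨z, hyz, hzy⟩ := hx
    rwa [ε.2 x z y hxy hzy]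
  · intro hinv
    refine Subtype.ext (funext fun x => ?_)
    rw [dmul_apply]
    cases hx : ε.1 x with
    | none => rfl
    | some y => simp [hinv x y hx, hx]

noncomputable def idempotentEquiv (α : PInj n) :
    {ε : PInj n // dmul α ε ε = ε} ≃ {A : Set (Fin n) // A ⊆ α.ran} :=
  (Equiv.subtypeEquivRight fun _ => dmul_self_eq_self_iff).trans <|
    (restrictionEquiv α.inv).trans (Equiv.subtypeEquivRight fun _ => by rw [dom_inv])

end PInj

/-- `ε · α · ε = ε` iff `dom ε ⊆ ran α` and `ε` agrees with `α⁻¹` on its domain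
(i.e. `ε x = some y → α y = some x`); hence the idempotents of `(IS_n, *_α)`
are in bijection with the subsets of `ran α`. -/
theorem idempotent_iff_and_equiv_powerset (n : ℕ) (α : PInj n) :
    (∀ ε : PInj n,
      PInj.dmul α ε ε = ε ↔
        ε.dom ⊆ α.ran ∧ ∀ x y : Fin n, ε.1 x = some y → α.1 y = some x) ∧
    Nonempty ({ε : PInj n // PInj.dmul α ε ε = ε} ≃ {A : Set (Fin n) // A ⊆ α.ran}) := by
  refine ⟨fun ε => ?_, ⟨PInj.idempotentEquiv α⟩⟩
  rw [PInj.dmul_self_eq_self_iff]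
  refine ⟨fun h => ⟨?_, PInj.isRestriction_inv_iff.mp h⟩,
    fun h => PInj.isRestriction_inv_iff.mpr h.2⟩
  simpa only [PInj.dom_inv] using h.dom_subset
end

section
/- If α, β ∈ IS_n have equal rank, then there exist permutations τ, π ∈ S_n with β = τ·α·π, and the map f(ξ) = π⁻¹·ξ·τ⁻¹ is a semigroup isomorphism from (IS_n, *_α) to (IS_n, *_β). -/
namespace PInj

variable {n : ℕ}

@[ext]
theorem ext {f g : PInj n} (h : ∀ x, f.1 x = g.1 x) : f = g :=
  Subtype.ext (funext h)

theorem comp_apply (f g : PInj n) (x : Fin n) : (f.comp g).1 x = (f.1 x).bind g.1 := rfl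

theorem ofPerm_apply (σ : Equiv.Perm (Fin n)) (x : Fin n) : (ofPerm σ).1 x = some (σ x) := rfl

theorem comp_assoc (f g h : PInj n) : (f.comp g).comp h = f.comp (g.comp h) := by
  ext x
  simp only [comp_apply]
  cases f.1 x <;> rfl

theorem ofPerm_comp_ofPerm (σ ρ : Equiv.Perm (Fin n)) :
    (ofPerm σ).comp (ofPerm ρ) = ofPerm (ρ * σ) := rfl

theorem ofPerm_one_comp (f : PInj n) : (ofPerm 1).comp f = f := rfl

theorem comp_ofPerm_one (f : PInj n) : f.comp (ofPerm 1) = f := by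
  ext x
  simp only [comp_apply, ofPerm_apply]
  cases f.1 x <;> rfl

theorem ofPerm_inv_comp_ofPerm_comp (σ : Equiv.Perm (Fin n)) (f : PInj n) :
    (ofPerm σ⁻¹).comp ((ofPerm σ).comp f) = f := by
  rw [← comp_assoc, ofPerm_comp_ofPerm, mul_inv_cancel, ofPerm_one_comp]

theorem ofPerm_comp_ofPerm_inv_comp (σ : Equiv.Perm (Fin n)) (f : PInj n) :
    (ofPerm σ).comp ((ofPerm σ⁻¹).comp f) = f := by
  simpa using ofPerm_inv_comp_ofPerm_comp σ⁻¹ f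

theorem bijective_ofPerm_comp_comp_ofPerm (σ ρ : Equiv.Perm (Fin n)) :
    Function.Bijective fun ξ : PInj n => ((ofPerm σ).comp ξ).comp (ofPerm ρ) := by
  refine Function.bijective_iff_has_inverse.mpr
    ⟨fun ξ => ((ofPerm σ⁻¹).comp ξ).comp (ofPerm ρ⁻¹), fun ξ => ?_, fun ξ => ?_⟩
  all_goals simp only [comp_assoc, ofPerm_comp_ofPerm, mul_inv_cancel, inv_mul_cancel,
    comp_ofPerm_one, ofPerm_inv_comp_ofPerm_comp, ofPerm_comp_ofPerm_inv_comp]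

theorem ofPerm_comp_dmul_comp_ofPerm (τ π : Equiv.Perm (Fin n)) (α x y : PInj n) :
    ((ofPerm π⁻¹).comp (dmul α x y)).comp (ofPerm τ⁻¹) =
      dmul (((ofPerm τ).comp α).comp (ofPerm π))
        (((ofPerm π⁻¹).comp x).comp (ofPerm τ⁻¹)) (((ofPerm π⁻¹).comp y).comp (ofPerm τ⁻¹)) := by
  simp only [dmul, comp_assoc, ofPerm_inv_comp_ofPerm_comp, ofPerm_comp_ofPerm_inv_comp]

def get (f : PInj n) (x : f.dom) : Fin n := (f.1 x).get x.2

theorem apply_eq_some_get (f : PInj n) (x : f.dom) : f.1 x = some (f.get x) :=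
  (Option.some_get x.2).symm

theorem apply_eq_none_of_notMem_dom {f : PInj n} {x : Fin n} (hx : x ∉ f.dom) : f.1 x = none :=
  Option.not_isSome_iff_eq_none.mp hx

theorem get_injective (f : PInj n) : Function.Injective f.get := fun x y hxy =>
  Subtype.ext <| f.2 x y (f.get y) (hxy ▸ f.apply_eq_some_get x) (f.apply_eq_some_get y)

theorem range_get (f : PInj n) : Set.range f.get = f.ran := by
  ext y
  constructor
  · rintro ⟨x, rfl⟩
    exact ⟨x, f.apply_eq_some_get x⟩
  · rintro ⟨x, hx⟩
    refine ⟨⟨x, by simp [dom, hx]⟩, Option.some_injective _ ?_⟩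
    rw [← apply_eq_some_get, hx]

theorem rank_eq_card_dom (f : PInj n) : f.rank = Nat.card f.dom := by
  rw [rank, ← range_get, Set.ncard_range_of_injective f.get_injective]

theorem exists_eq_ofPerm_comp_comp_ofPerm_of_rank_eq {α β : PInj n} (h : α.rank = β.rank) :
    ∃ τ π : Equiv.Perm (Fin n), β = ((ofPerm τ).comp α).comp (ofPerm π) := by
  classical
  obtain ⟨e⟩ : Nonempty (β.dom ≃ α.dom) := by
    rw [← Finite.card_eq, ← rank_eq_card_dom, ← rank_eq_card_dom, h]
  -- `τ` carries `dom β` onto `dom α`, hence the complements onto each other;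
  -- `π` only has to be prescribed on the values taken on `dom β`.
  obtain ⟨π, hπ⟩ := Equiv.Perm.exists_extending_pair (fun x => α.get (e x)) β.get
    (α.get_injective.comp e.injective) β.get_injective
  refine ⟨e.extendSubtype, π, ext fun x => ?_⟩
  by_cases hx : x ∈ β.dom
  · rw [comp_apply, comp_apply, ofPerm_apply, Option.bind_some,
      e.extendSubtype_apply_of_mem x hx, apply_eq_some_get α (e ⟨x, hx⟩), Option.bind_some,
      ofPerm_apply, hπ, apply_eq_some_get β ⟨x, hx⟩]
  · rw [comp_apply, comp_apply, ofPerm_apply, Option.bind_some, apply_eq_none_of_notMem_dom hx,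
      apply_eq_none_of_notMem_dom (e.extendSubtype_not_mem x hx), Option.bind_none]

end PInj

/-- If `rank α = rank β` then `β = τ·α·π` for permutations `τ, π ∈ S_n`, and
`f(ξ) = π⁻¹·ξ·τ⁻¹` is a semigroup isomorphism `(IS_n, *_α) → (IS_n, *_β)`. -/
theorem rank_eq_gives_iso (n : ℕ) (α β : PInj n) (h : α.rank = β.rank) :
    ∃ τ π : Equiv.Perm (Fin n),
      β = ((PInj.ofPerm τ).comp α).comp (PInj.ofPerm π) ∧
      Function.Bijective
        (fun ξ : PInj n => ((PInj.ofPerm π⁻¹).comp ξ).comp (PInj.ofPerm τ⁻¹)) ∧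
      ∀ x y : PInj n,
        ((PInj.ofPerm π⁻¹).comp (PInj.dmul α x y)).comp (PInj.ofPerm τ⁻¹) =
          PInj.dmul β (((PInj.ofPerm π⁻¹).comp x).comp (PInj.ofPerm τ⁻¹))
            (((PInj.ofPerm π⁻¹).comp y).comp (PInj.ofPerm τ⁻¹)) := by
  obtain ⟨τ, π, rfl⟩ := PInj.exists_eq_ofPerm_comp_comp_ofPerm_of_rank_eq h
  exact ⟨τ, π, rfl, PInj.bijective_ofPerm_comp_comp_ofPerm _ _,
    PInj.ofPerm_comp_dmul_comp_ofPerm τ π α⟩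
end

section
/- The number of isomorphism classes of semigroups of the form (T_n, *_a), a ∈ T_n, equals p(n), the number of partitions of the integer n. -/
/-- Left-to-right composition in the full transformation monoid `T_n`:
`(x · a)(i) = a (x i)` (apply `x` first, then `a`). -/
def Tcomp {n : ℕ} (x a : Fin n → Fin n) : Fin n → Fin n := fun i => a (x i)

/-- The deformed multiplication `x *_a y = x · a · y` on `T_n`. -/
def Tdmul {n : ℕ} (a x y : Fin n → Fin n) : Fin n → Fin n := Tcomp (Tcomp x a) y

/-!
The isomorphism type of `(T_n, *_a)` is determined by the kernel type of `a`, the multiset of sizes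
of its nonempty fibres, which is a partition of `n`; every partition is such a kernel type.

If `b ∘ φ = σ ∘ a` for permutations `σ, φ`, then `x ↦ φ ∘ x ∘ σ⁻¹` is an isomorphism, and equal
kernel types provide such `σ, φ`. Conversely the constant maps are exactly the right zeros of
every variant, so an isomorphism `e` permutes them and induces a permutation `f` of the points with
`f (z (a v)) = e z (b (f v))`. Taking `z = id` and `z = e⁻¹ id` shows that `f` carries the kernel
of `a` onto that of `b`; the number of fibres of size `k` is `1 / k` times the number of points
whose kernel class has `k` elements, so it is read off from the kernel.
-/

open Finset Function

theorem Multiset.eq_of_card_eq_of_filter_ne_zero_eq {s t : Multiset ℕ}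
    (hcard : card s = card t) (h : s.filter (· ≠ 0) = t.filter (· ≠ 0)) : s = t := by
  have zeros : ∀ u : Multiset ℕ, u.filter (¬ · ≠ 0) = replicate (card (u.filter (¬ · ≠ 0))) 0 :=
    fun u => eq_replicate_card.2 fun _ hx => not_not.1 (mem_filter.1 hx).2
  have card_zeros : card (s.filter (¬ · ≠ 0)) = card (t.filter (¬ · ≠ 0)) := by
    have hs := card_add (s.filter (· ≠ 0)) (s.filter (¬ · ≠ 0))
    have ht := card_add (t.filter (· ≠ 0)) (t.filter (¬ · ≠ 0))
    rw [filter_add_not] at hs ht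
    rw [h] at hs
    omega
  rw [← filter_add_not (· ≠ 0) s, ← filter_add_not (· ≠ 0) t, h, zeros s, zeros t, card_zeros]

section FiberType

variable {α β γ δ : Type*} [Fintype α] [Fintype β] [DecidableEq β]
  [Fintype γ] [Fintype δ] [DecidableEq δ]

def fiberCard (a : α → β) (y : β) : ℕ := Fintype.card {x // a x = y}

def fiberType (a : α → β) : Multiset ℕ := (univ : Finset β).val.map (fiberCard a)

theorem count_fiberType (a : α → β) (k : ℕ) :
    (fiberType a).count k = Fintype.card {y // fiberCard a y = k} := by
  simp [fiberType, Multiset.count_map, Fintype.card_subtype, Finset.card_def, eq_comm]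

theorem card_fiberType (a : α → β) : Multiset.card (fiberType a) = Fintype.card β := by
  simp [fiberType]

theorem sum_fiberType (a : α → β) : (fiberType a).sum = Fintype.card α := by
  rw [Fintype.card_congr (Equiv.sigmaFiberEquiv a).symm, Fintype.card_sigma]
  rfl

theorem card_fiberCard_apply_eq (a : α → β) (k : ℕ) :
    Fintype.card {x // fiberCard a (a x) = k} = k * Fintype.card {y // fiberCard a y = k} := by
  rw [← Fintype.card_congr (Equiv.sigmaSubtypeFiberEquivSubtype a
    (q := fun y => fiberCard a y = k) fun _ => Iff.rfl), Fintype.card_sigma]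
  simp only [fun y : {y // fiberCard a y = k} => show Fintype.card {x // a x = y} = k from y.2]
  simp [mul_comm]

theorem fiberType_filter_eq_of_forall_card_eq {a : α → β} {c : γ → δ}
    (h : ∀ k ≠ 0,
      Fintype.card {y // fiberCard a y = k} = Fintype.card {y // fiberCard c y = k}) :
    (fiberType a).filter (· ≠ 0) = (fiberType c).filter (· ≠ 0) := by
  ext k
  simp only [Multiset.count_filter, count_fiberType]
  split_ifs with hk
  · exact h k hk
  · rfl

theorem fiberType_comp_equiv (a : α → β) (e : γ ≃ α) : fiberType (a ∘ e) = fiberType a := by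
  unfold fiberType fiberCard
  congr! 2 with y
  exact Fintype.card_congr (e.subtypeEquiv fun _ => Iff.rfl)

theorem fiberType_filter_comp_of_injective (a : α → β) {g : β → δ} (hg : Injective g) :
    (fiberType (g ∘ a)).filter (· ≠ 0) = (fiberType a).filter (· ≠ 0) := by
  have fiber_apply : ∀ y, fiberCard (g ∘ a) (g y) = fiberCard a y := fun y =>
    Fintype.card_congr (Equiv.subtypeEquivRight fun _ => hg.eq_iff)
  refine fiberType_filter_eq_of_forall_card_eq fun k hk => ?_
  refine (Fintype.card_congr (Equiv.ofBijective (fun y => ⟨g y, (fiber_apply y).trans y.2⟩)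
    ⟨fun y y' hyy' => Subtype.ext (hg (congrArg Subtype.val hyy')), fun z => ?_⟩)).symm
  obtain ⟨⟨x, hx⟩⟩ : Nonempty {x // g (a x) = z} := Fintype.card_pos_iff.1 <| by
    rw [← z.2] at hk
    exact Nat.pos_of_ne_zero hk
  exact ⟨⟨a x, by rw [← fiber_apply, hx]; exact z.2⟩, Subtype.ext hx⟩

theorem fiberType_sigma_fst {ι : Type*} [Fintype ι] [DecidableEq ι] (k : ι → ℕ) :
    fiberType (Sigma.fst : (Σ i, Fin (k i)) → ι) = (univ : Finset ι).val.map k := by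
  unfold fiberType fiberCard
  congr! 2 with i
  simp [Fintype.card_congr (Equiv.sigmaSubtype i)]

theorem fiberType_filter_eq_of_ker {a : α → β} {c : γ → δ} (f : α ≃ γ)
    (h : ∀ v v', a v = a v' ↔ c (f v) = c (f v')) :
    (fiberType a).filter (· ≠ 0) = (fiberType c).filter (· ≠ 0) := by
  have fiber_apply : ∀ v, fiberCard a (a v) = fiberCard c (c (f v)) := fun v =>
    Fintype.card_congr (f.subtypeEquiv fun x => h x v)
  refine fiberType_filter_eq_of_forall_card_eq fun k hk =>
    Nat.eq_of_mul_eq_mul_left (Nat.pos_of_ne_zero hk) ?_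
  rw [← card_fiberCard_apply_eq, ← card_fiberCard_apply_eq]
  exact Fintype.card_congr (f.subtypeEquiv fun v => by rw [fiber_apply])

theorem exists_equiv_comp_eq_of_fiberType_eq {a b : α → β} (h : fiberType a = fiberType b) :
    ∃ (σ : β ≃ β) (φ : α ≃ α), ∀ x, b (φ x) = σ (a x) := by
  have card_eq : ∀ k,
      Fintype.card {y // fiberCard a y = k} = Fintype.card {y // fiberCard b y = k} :=
    fun k => by rw [← count_fiberType, ← count_fiberType, h]
  let σ : β ≃ β := Equiv.ofFiberEquiv fun k => Fintype.equivOfCardEq (card_eq k)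
  have hσ : ∀ y, fiberCard b (σ y) = fiberCard a y := Equiv.ofFiberEquiv_map _
  let φ : α ≃ α := Equiv.ofFiberEquiv (f := a) (g := σ.symm ∘ b) fun y =>
    Fintype.equivOfCardEq <| (hσ y).symm.trans <|
      Fintype.card_congr (Equiv.subtypeEquivRight fun _ => σ.symm_apply_eq.symm)
  exact ⟨σ, φ, fun x => σ.symm_apply_eq.1 (Equiv.ofFiberEquiv_map (g := σ.symm ∘ b) _ x)⟩

theorem exists_fiberType_filter_eq {ι : Type*} [Fintype ι] [DecidableEq ι] [DecidableEq α]
    {k : ι → ℕ} (hk : ∀ i, 0 < k i) (e : (Σ i, Fin (k i)) ≃ α) :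
    ∃ u : α → α, (fiberType u).filter (· ≠ 0) = (univ : Finset ι).val.map k := by
  let block : ι → Σ i, Fin (k i) := fun i => ⟨i, ⟨0, hk i⟩⟩
  have block_inj : Injective block := fun i j hij => congrArg Sigma.fst hij
  refine ⟨(e ∘ block) ∘ (Sigma.fst ∘ e.symm), ?_⟩
  rw [fiberType_filter_comp_of_injective _ (e.injective.comp block_inj), fiberType_comp_equiv,
    fiberType_sigma_fst, Multiset.filter_eq_self]
  simpa using fun i => (hk i).ne'

end FiberType

section Variant

variable {n : ℕ}

def VariantIso (a b : Fin n → Fin n) : Prop :=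
  ∃ e : (Fin n → Fin n) ≃ (Fin n → Fin n), ∀ x y, e (Tdmul a x y) = Tdmul b (e x) (e y)

/-- `ofSums` drops the zero entries of `fiberType a`, i.e. the empty fibres. -/
def kernelType (a : Fin n → Fin n) : Nat.Partition n :=
  .ofSums n (fiberType a) (by rw [sum_fiberType, Fintype.card_fin])

theorem kernelType_eq_iff {a b : Fin n → Fin n} :
    kernelType a = kernelType b ↔ fiberType a = fiberType b := by
  refine ⟨fun h => Multiset.eq_of_card_eq_of_filter_ne_zero_eq ?_ (congrArg Nat.Partition.parts h),
    fun h => Nat.Partition.ext (by simp [kernelType, h])⟩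
  rw [card_fiberType, card_fiberType]

theorem exists_kernelType_eq (p : Nat.Partition n) : ∃ u : Fin n → Fin n, kernelType u = p := by
  classical
  have hcard : Fintype.card (Σ i : p.parts, Fin i) = n := by
    simp [Fintype.card_sigma, Finset.sum_eq_multiset_sum, p.parts_sum]
  obtain ⟨u, hu⟩ := exists_fiberType_filter_eq (k := fun i : p.parts => (i : ℕ))
    (fun _ => p.parts_pos Multiset.coe_mem) (Fintype.equivFinOfCardEq hcard)
  exact ⟨u, Nat.Partition.ext (by simpa [kernelType] using hu)⟩

theorem tdmul_const_left (a z : Fin n → Fin n) (v : Fin n) :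
    Tdmul a (const _ v) z = const _ (z (a v)) := rfl

theorem eq_const_of_forall_tdmul_eq [NeZero n] {a c : Fin n → Fin n}
    (h : ∀ x, Tdmul a x c = c) : c = const _ (c 0) :=
  funext fun i => (congrFun (h (const _ 0)) i).symm.trans (congrFun (h (const _ 0)) 0)

theorem VariantIso.exists_equiv_ker [NeZero n] {a b : Fin n → Fin n} (h : VariantIso a b) :
    ∃ f : Fin n ≃ Fin n, ∀ v v', a v = a v' ↔ b (f v) = b (f v') := by
  obtain ⟨e, he⟩ := h
  have e_const : ∀ v, e (const _ v) = const _ (e (const _ v) 0) := fun v =>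
    eq_const_of_forall_tdmul_eq fun x => by
      rw [← e.apply_symm_apply x, ← he]
      rfl
  set f : Fin n → Fin n := fun v => e (const _ v) 0
  have key : ∀ z v, f (z (a v)) = e z (b (f v)) := fun z v => by
    have := congrFun (he (const _ v) z) 0
    rwa [tdmul_const_left, e_const v, tdmul_const_left] at this
  have f_inj : Injective f := fun v v' hvv' =>
    const_injective (e.injective (by rw [e_const v, e_const v']; exact congrArg _ hvv'))
  refine ⟨Equiv.ofBijective f (Finite.injective_iff_bijective.1 f_inj),
    fun v v' => ⟨fun hv => ?_, fun hv => ?_⟩⟩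
  · have := key (e.symm id)
    simp only [Equiv.apply_symm_apply, id] at this
    change b (f v) = b (f v')
    rw [← this, ← this, hv]
  · change b (f v) = b (f v') at hv
    exact f_inj ((key id v).trans ((congrArg (e id) hv).trans (key id v').symm))

theorem variantIso_of_comp_eq {a b : Fin n → Fin n} (σ φ : Fin n ≃ Fin n)
    (h : ∀ x, b (φ x) = σ (a x)) : VariantIso a b := by
  refine ⟨Equiv.arrowCongr σ φ, fun x y => funext fun i => ?_⟩
  simp [Tdmul, Tcomp, h]

theorem variantIso_iff_kernelType_eq {a b : Fin n → Fin n} :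
    VariantIso a b ↔ kernelType a = kernelType b := by
  refine ⟨fun h => ?_, fun h => ?_⟩
  · obtain rfl | hn := eq_or_ne n 0
    · exact congrArg _ (Subsingleton.elim a b)
    have := NeZero.mk hn
    obtain ⟨f, hf⟩ := h.exists_equiv_ker
    exact Nat.Partition.ext (fiberType_filter_eq_of_ker f hf)
  · obtain ⟨σ, φ, hσφ⟩ := exists_equiv_comp_eq_of_fiberType_eq (kernelType_eq_iff.1 h)
    exact variantIso_of_comp_eq σ φ hσφ

end Variant

/-- The number of isomorphism classes of semigroups `(T_n, *_a)`, `a ∈ T_n`,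
equals `p(n)`, the number of partitions of `n`: there is a set of `p(n)`
deforming elements meeting each isomorphism class exactly once. -/
theorem card_iso_classes_T (n : ℕ) :
    ∃ S : Finset (Fin n → Fin n), S.card = Fintype.card (Nat.Partition n) ∧
      (∀ a : Fin n → Fin n, ∃ b ∈ S, ∃ e : (Fin n → Fin n) ≃ (Fin n → Fin n),
          ∀ x y : Fin n → Fin n, e (Tdmul a x y) = Tdmul b (e x) (e y)) ∧
      (∀ a ∈ S, ∀ b ∈ S,
        (∃ e : (Fin n → Fin n) ≃ (Fin n → Fin n),
            ∀ x y : Fin n → Fin n, e (Tdmul a x y) = Tdmul b (e x) (e y)) → a = b) := by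
  choose c hc using exists_kernelType_eq (n := n)
  refine ⟨univ.image c, ?_, fun a => ⟨c (kernelType a), mem_image_of_mem _ (mem_univ _),
    variantIso_iff_kernelType_eq.2 (hc _).symm⟩, ?_⟩
  · rw [card_image_of_injective _ (LeftInverse.injective hc), card_univ]
  · simp only [mem_image, mem_univ, true_and]
    rintro _ ⟨p, rfl⟩ _ ⟨q, rfl⟩ hpq
    exact congrArg c ((hc p).symm.trans ((variantIso_iff_kernelType_eq.1 hpq).trans (hc q)))
end
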